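/- In the group H_p = ⟨U, V, W | [U,V]=W², W^{2p}=1, W central⟩, two elements U^q V^r W^ν and U^{q*} V^{r*} W^{ν*} are conjugate if and only if q = q*, r = r*, and ν ≡ ν* (mod 2·gcd(p,q,r)). -/

import Mathlib

/-!
Since `[U, V] = W²` is central, commutators of powers are bilinear, `[U^α, V^β] = W^{2αβ}`, so
conjugating `U^q V^r W^ν` by `U^α V^β` gives `U^q V^r W^{ν + 2(αr - βq)}`; together with
`W^{2p} = 1` this moves `ν` by any element of `2(pℤ + qℤ + rℤ) = 2 gcd(p, q, r) ℤ`.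
Conversely, `U^a V^b W^c ↦ (a, b, c mod 2p)` is a homomorphism to a model group on
`ℤ × ℤ × ZMod |2p|` where the same conjugation formula holds, so conjugation can change neither
`q`, `r` nor the class of `ν` modulo `2 gcd(p, q, r)`.
-/

open FreeGroup
open scoped commutatorElement

/-- The relators of the group `H_p = ⟨U,V,W | [U,V]=W², W^{2p}=1, W central⟩`,
with generators indexed by `Fin 3` as `U = 0`, `V = 1`, `W = 2`. -/
def HpRels (p : ℤ) : Set (FreeGroup (Fin 3)) :=
  { ⁅of (0 : Fin 3), of (1 : Fin 3)⁆ * (of (2 : Fin 3)) ^ (-2 : ℤ),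
    (of (2 : Fin 3)) ^ (2 * p),
    ⁅of (0 : Fin 3), of (2 : Fin 3)⁆, ⁅of (1 : Fin 3), of (2 : Fin 3)⁆ }

/-- The group `H_p = π₁ Mapsₚ(S¹×S¹, S²)`. -/
abbrev Hp (p : ℤ) : Type := PresentedGroup (HpRels p)

def Hp.U (p : ℤ) : Hp p := PresentedGroup.of 0
def Hp.V (p : ℤ) : Hp p := PresentedGroup.of 1
def Hp.W (p : ℤ) : Hp p := PresentedGroup.of 2

section CentralCommutator

variable {G : Type*} [Group G] {u v : G}

theorem commutatorElement_zpow_right_of_mem_center (h : ⁅u, v⁆ ∈ Subgroup.center G) (n : ℤ) :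
    ⁅u, v ^ n⁆ = ⁅u, v⁆ ^ n := by
  have hconj : u * v * u⁻¹ = ⁅u, v⁆ * v := by rw [commutatorElement_def]; group
  have hcomm : Commute ⁅u, v⁆ v := (Subgroup.mem_center_iff.1 h v).symm
  rw [commutatorElement_def, ← conj_zpow, hconj, hcomm.mul_zpow]
  group

theorem commutatorElement_zpow_zpow_of_mem_center (h : ⁅u, v⁆ ∈ Subgroup.center G) (m n : ℤ) :
    ⁅u ^ m, v ^ n⁆ = ⁅u, v⁆ ^ (m * n) := by
  have hvu : ⁅v ^ n, u⁆ = (⁅u, v⁆ ^ n)⁻¹ := by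
    rw [← commutatorElement_inv, commutatorElement_zpow_right_of_mem_center h]
  have hvu_center : ⁅v ^ n, u⁆ ∈ Subgroup.center G := by
    rw [hvu]; exact inv_mem (zpow_mem h n)
  rw [← commutatorElement_inv, commutatorElement_zpow_right_of_mem_center hvu_center, hvu]
  group

theorem conj_zpow_mul_zpow_of_mem_center (h : ⁅u, v⁆ ∈ Subgroup.center G) (α β q r : ℤ) :
    (u ^ α * v ^ β) * (u ^ q * v ^ r) * (u ^ α * v ^ β)⁻¹ =
      ⁅u, v⁆ ^ (α * r - β * q) * (u ^ q * v ^ r) := by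
  have central : ∀ k : ℤ, ⁅u, v⁆ ^ k ∈ Subgroup.center G := fun k => zpow_mem h k
  have hleft : u ^ α * ⁅v ^ β, u ^ q⁆ * (u ^ α)⁻¹ = ⁅u, v⁆ ^ (-(β * q)) := by
    rw [← commutatorElement_inv, commutatorElement_zpow_zpow_of_mem_center h, ← zpow_neg,
      Subgroup.mem_center_iff.1 (central _), mul_inv_cancel_right, mul_comm q β]
  have hright : u ^ q * ⁅u ^ α, v ^ r⁆ = ⁅u, v⁆ ^ (α * r) * u ^ q := by
    rw [commutatorElement_zpow_zpow_of_mem_center h, Subgroup.mem_center_iff.1 (central _)]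
  calc (u ^ α * v ^ β) * (u ^ q * v ^ r) * (u ^ α * v ^ β)⁻¹
      = (u ^ α * ⁅v ^ β, u ^ q⁆ * (u ^ α)⁻¹) * (u ^ q * ⁅u ^ α, v ^ r⁆ * v ^ r) := by
        simp only [commutatorElement_def]; group
    _ = ⁅u, v⁆ ^ (-(β * q)) * ⁅u, v⁆ ^ (α * r) * (u ^ q * v ^ r) := by
        rw [hleft, hright]; group
    _ = ⁅u, v⁆ ^ (α * r - β * q) * (u ^ q * v ^ r) := by
        rw [← zpow_add, neg_add_eq_sub]

end CentralCommutator

theorem Int.modEq_two_mul_gcd_gcd_iff {p q r a b : ℤ} :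
    a ≡ b [ZMOD 2 * (p.gcd (q.gcd r) : ℤ)] ↔ ∃ x y z : ℤ, b = a + 2 * (p * x + q * y + r * z) := by
  rw [Int.modEq_iff_dvd, Int.coe_gcd, Int.coe_gcd]
  constructor
  · rintro ⟨k, hk⟩
    obtain ⟨x, w, hxw⟩ := (gcd_dvd_iff_exists p (gcd q r)).1 (dvd_mul_right _ k)
    obtain ⟨y, z, hyz⟩ := (gcd_dvd_iff_exists q r).1 (dvd_mul_right _ w)
    exact ⟨x, y, z, by linear_combination hk + 2 * hxw + 2 * hyz⟩
  · rintro ⟨x, y, z, rfl⟩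
    rw [add_sub_cancel_left]
    have hq := (gcd_dvd_right p (gcd q r)).trans (gcd_dvd_left q r)
    have hr := (gcd_dvd_right p (gcd q r)).trans (gcd_dvd_right q r)
    exact mul_dvd_mul_left 2 <|
      (((gcd_dvd_left p _).mul_right x).add (hq.mul_right y)).add (hr.mul_right z)

namespace Hp

variable {p : ℤ}

theorem commutatorElement_U_V : ⁅U p, V p⁆ = W p ^ 2 := by
  have h := PresentedGroup.one_of_mem (rels := HpRels p) (Set.mem_insert _ _)
  rw [_root_.map_mul, _root_.map_zpow, map_commutatorElement, mul_eq_one_iff_eq_inv,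
    ← zpow_neg] at h
  exact h

theorem W_zpow_two_mul : W p ^ (2 * p) = 1 := by
  have h := PresentedGroup.one_of_mem (rels := HpRels p) (x := of 2 ^ (2 * p)) (by simp [HpRels])
  rwa [_root_.map_zpow] at h

theorem W_mem_center : W p ∈ Subgroup.center (Hp p) := by
  rw [Subgroup.center_eq_iInf (PresentedGroup.closure_range_of _)]
  simp only [Subgroup.mem_iInf, Set.mem_range, forall_exists_index, forall_apply_eq_imp_iff,
    Subgroup.mem_centralizer_singleton_iff]
  intro i
  by_cases hi : i = 2
  · rw [hi]; rfl
  have hrel : ⁅of i, of 2⁆ ∈ HpRels p := by fin_cases i <;> simp_all [HpRels]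
  have h := PresentedGroup.one_of_mem hrel
  rw [map_commutatorElement, commutatorElement_eq_one_iff_mul_comm] at h
  exact h.symm

theorem conj_U_zpow_mul_V_zpow (α β q r ν : ℤ) :
    (U p ^ α * V p ^ β) * (U p ^ q * V p ^ r * W p ^ ν) * (U p ^ α * V p ^ β)⁻¹ =
      U p ^ q * V p ^ r * W p ^ (ν + 2 * (α * r - β * q)) := by
  have hW : ∀ k : ℤ, W p ^ k ∈ Subgroup.center (Hp p) := fun k => zpow_mem W_mem_center k
  have hUV : ⁅U p, V p⁆ ∈ Subgroup.center (Hp p) := commutatorElement_U_V ▸ hW 2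
  set g := U p ^ α * V p ^ β
  set y := U p ^ q * V p ^ r
  calc g * (y * W p ^ ν) * g⁻¹ = (g * y * g⁻¹) * (g * W p ^ ν * g⁻¹) := by group
    _ = (W p ^ 2) ^ (α * r - β * q) * y * W p ^ ν := by
        rw [conj_zpow_mul_zpow_of_mem_center hUV, commutatorElement_U_V,
          Subgroup.mem_center_iff.1 (hW ν), mul_inv_cancel_right]
    _ = y * (W p ^ (2 * (α * r - β * q)) * W p ^ ν) := by
        rw [← zpow_natCast, ← zpow_mul, Nat.cast_ofNat, ← Subgroup.mem_center_iff.1 (hW _) y,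
          mul_assoc]
    _ = y * W p ^ (ν + 2 * (α * r - β * q)) := by rw [← zpow_add, add_comm]

end Hp

/-- `ℤ × ℤ × ZMod n` with the product `(a, b, c) (a', b', c') = (a + a', b + b', c + c' - 2 b a')`,
which is how the normal forms `U^a V^b W^c` multiply in `H_p`. -/
@[ext]
structure HpModel (n : ℕ) where
  a : ℤ
  b : ℤ
  c : ZMod n

namespace HpModel

variable {n : ℕ}

instance : Mul (HpModel n) := ⟨fun x y => ⟨x.a + y.a, x.b + y.b, x.c + y.c - 2 * x.b * y.a⟩⟩
instance : One (HpModel n) := ⟨⟨0, 0, 0⟩⟩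
instance : Inv (HpModel n) := ⟨fun x => ⟨-x.a, -x.b, -x.c - 2 * x.a * x.b⟩⟩

@[simp] theorem mul_a (x y : HpModel n) : (x * y).a = x.a + y.a := rfl
@[simp] theorem mul_b (x y : HpModel n) : (x * y).b = x.b + y.b := rfl
@[simp] theorem mul_c (x y : HpModel n) : (x * y).c = x.c + y.c - 2 * x.b * y.a := rfl
@[simp] theorem one_a : (1 : HpModel n).a = 0 := rfl
@[simp] theorem one_b : (1 : HpModel n).b = 0 := rfl
@[simp] theorem one_c : (1 : HpModel n).c = 0 := rfl
@[simp] theorem inv_a (x : HpModel n) : x⁻¹.a = -x.a := rfl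
@[simp] theorem inv_b (x : HpModel n) : x⁻¹.b = -x.b := rfl
@[simp] theorem inv_c (x : HpModel n) : x⁻¹.c = -x.c - 2 * x.a * x.b := rfl

instance : Group (HpModel n) where
  mul_assoc x y z := by ext <;> simp <;> ring
  one_mul x := by ext <;> simp
  mul_one x := by ext <;> simp
  inv_mul_cancel x := by ext <;> simp; ring

theorem zpow_of_mul_eq_zero (x : HpModel n) (hx : x.a * x.b = 0) (k : ℤ) :
    x ^ k = ⟨k * x.a, k * x.b, k * x.c⟩ := by
  have hx' : (x.a : ZMod n) * x.b = 0 := by rw [← Int.cast_mul, hx, Int.cast_zero]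
  induction k using Int.induction_on with
  | zero => ext <;> simp
  | succ k ih =>
    rw [zpow_add_one, ih]
    ext
    · simp; ring
    · simp; ring
    · simp; linear_combination (-2 * (k : ZMod n)) * hx'
  | pred k ih =>
    rw [zpow_sub_one, ih]
    ext
    · simp; ring
    · simp; ring
    · simp; linear_combination (-2 * (k : ZMod n) - 2) * hx'

theorem conj_eq (g x : HpModel n) :
    g * x * g⁻¹ = ⟨x.a, x.b, x.c + 2 * (g.a * x.b - g.b * x.a)⟩ := by
  ext <;> simp; ring

theorem isConj_iff {x y : HpModel n} :
    IsConj x y ↔ x.a = y.a ∧ x.b = y.b ∧ ∃ α β : ℤ, y.c = x.c + 2 * (α * x.b - β * x.a) := by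
  rw [_root_.isConj_iff]
  constructor
  · rintro ⟨g, rfl⟩
    rw [conj_eq]
    exact ⟨rfl, rfl, g.a, g.b, rfl⟩
  · rintro ⟨ha, hb, α, β, hc⟩
    exact ⟨⟨α, β, 0⟩, by rw [conj_eq]; ext <;> simp [ha, hb, hc]⟩

end HpModel

namespace Hp

theorem toModel_rels (p : ℤ) : ∀ x ∈ HpRels p,
    FreeGroup.lift (![⟨1, 0, 0⟩, ⟨0, 1, 0⟩, ⟨0, 0, 1⟩] : Fin 3 → HpModel (2 * p).natAbs) x = 1 := by
  have h2p : (2 * p : ZMod (2 * p).natAbs) = 0 := by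
    exact_mod_cast (ZMod.intCast_zmod_eq_zero_iff_dvd _ _).2 (Int.natAbs_dvd.2 dvd_rfl)
  simp only [HpRels, Set.mem_insert_iff, Set.mem_singleton_iff, forall_eq_or_imp, forall_eq]
  simp only [_root_.map_mul, _root_.map_zpow, map_commutatorElement, FreeGroup.lift_apply_of]
  refine ⟨?_, ?_, ?_, ?_⟩ <;> ext <;>
    simp [commutatorElement_def, HpModel.zpow_of_mul_eq_zero, pow_two, h2p]
  ring

noncomputable def toModel (p : ℤ) : Hp p →* HpModel (2 * p).natAbs :=
  PresentedGroup.toGroup (toModel_rels p)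

theorem toModel_U_zpow_mul_V_zpow_mul_W_zpow (p q r ν : ℤ) :
    toModel p (U p ^ q * V p ^ r * W p ^ ν) = ⟨q, r, ν⟩ := by
  simp only [toModel, U, V, W, _root_.map_mul, map_zpow, PresentedGroup.toGroup.of,
    Matrix.cons_val_zero, Matrix.cons_val_one, Matrix.cons_val, mul_zero, mul_one,
    HpModel.zpow_of_mul_eq_zero]
  ext <;> simp

theorem isConj_iff {p q r ν q' r' ν' : ℤ} :
    IsConj (U p ^ q * V p ^ r * W p ^ ν) (U p ^ q' * V p ^ r' * W p ^ ν') ↔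
      q = q' ∧ r = r' ∧ ∃ x y z : ℤ, ν' = ν + 2 * (p * x + q * y + r * z) := by
  constructor
  · intro h
    have hmodel := (toModel p).map_isConj h
    rw [toModel_U_zpow_mul_V_zpow_mul_W_zpow, toModel_U_zpow_mul_V_zpow_mul_W_zpow,
      HpModel.isConj_iff] at hmodel
    obtain ⟨rfl, rfl, α, β, hc⟩ := hmodel
    obtain ⟨t, ht⟩ : 2 * p ∣ ν' - (ν + 2 * (α * r - β * q)) := by
      rw [← Int.natAbs_dvd, ← ZMod.intCast_eq_intCast_iff_dvd_sub]
      push_cast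
      exact hc.symm
    exact ⟨rfl, rfl, t, -β, α, by linear_combination ht⟩
  · rintro ⟨rfl, rfl, x, y, z, rfl⟩
    have hW : W p ^ (ν + 2 * (p * x + q * y + r * z)) = W p ^ (ν + 2 * (z * r - -y * q)) := by
      rw [show ν + 2 * (p * x + q * y + r * z) = ν + 2 * (z * r - -y * q) + 2 * p * x by ring,
        zpow_add _ _ (2 * p * x), zpow_mul, W_zpow_two_mul, one_zpow, mul_one]
    rw [hW]
    exact _root_.isConj_iff.2 ⟨_, conj_U_zpow_mul_V_zpow z (-y) q r ν⟩

end Hp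

/-- In `H_p = ⟨U,V,W | [U,V]=W², W^{2p}=1, W central⟩`, two elements `U^q V^r W^ν`
and `U^q* V^r* W^ν*` are conjugate if and only if `q = q*`, `r = r*` and
`ν ≡ ν* (mod 2·gcd(p,q,r))`. -/
theorem Hp_conjugacy (p q r ν q' r' ν' : ℤ) :
    IsConj (Hp.U p ^ q * Hp.V p ^ r * Hp.W p ^ ν)
        (Hp.U p ^ q' * Hp.V p ^ r' * Hp.W p ^ ν') ↔
      q = q' ∧ r = r' ∧ ν ≡ ν' [ZMOD (2 * (p.gcd (q.gcd r) : ℤ))] := by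
  rw [Hp.isConj_iff, Int.modEq_two_mul_gcd_gcd_iff]
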